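/- arXiv:2202.09702 — 3 statements merged into one kernel-verified Lean document; each statement's English description precedes it below -/
import Mathlib

section
/- Let m ≥ 2 and let R be an algebraic curvature tensor on ℝ^m with curvature operator 𝔯 and Ricci tensor Ric_{ij} = Σ_k R_{kikj}. Then for any integer 1 ≤ k ≤ m−1 and any unit vector v ∈ ℝ^m, one has Σ_{i,j} Ric_{ij} v_i v_j ≥ ((m−1)/2)·𝔯^(k), where 𝔯^(k) is the average of the k smallest eigenvalues of 𝔯. -/
open Finset

namespace Paper

noncomputable section

variable {m : ℕ}

/-- Kronecker delta. -/
def delta (i j : Fin m) : ℝ := if i = j then 1 else 0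

/-- `T` is an algebraic curvature tensor: antisymmetry in the first pair, pair symmetry,
and the first Bianchi identity. -/
def IsACT (T : Fin m → Fin m → Fin m → Fin m → ℝ) : Prop :=
  (∀ i j k t, T i j k t = - T j i k t) ∧
  (∀ i j k t, T i j k t = T k t i j) ∧
  (∀ i j k t, T i j k t + T i t j k + T i k t j = 0)

/-- Ricci contraction `(E_T)_{ij} = Σ_k T_{kikj}`. -/
def ric (T : Fin m → Fin m → Fin m → Fin m → ℝ) (i j : Fin m) : ℝ := ∑ k, T k i k j

/-- Total trace `S_T`. -/
def traceS (T : Fin m → Fin m → Fin m → Fin m → ℝ) : ℝ := ∑ i, ric T i i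

def inner2 (A B : Fin m → Fin m → ℝ) : ℝ := ∑ i, ∑ j, A i j * B i j

def inner4 (A B : Fin m → Fin m → Fin m → Fin m → ℝ) : ℝ :=
  ∑ i, ∑ j, ∑ k, ∑ t, A i j k t * B i j k t

def inner6 (A B : Fin m → Fin m → Fin m → Fin m → Fin m → Fin m → ℝ) : ℝ :=
  ∑ i, ∑ j, ∑ k, ∑ t, ∑ s, ∑ r, A i j k t s r * B i j k t s r

/-- Lichnerowicz operator `Γ` associated to `R`, acting on 2-covariant tensors. -/
def gamma2 (R : Fin m → Fin m → Fin m → Fin m → ℝ) (Q : Fin m → Fin m → ℝ)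
    (i j : Fin m) : ℝ :=
  (∑ s, ric R i s * Q s j) + (∑ s, ric R j s * Q i s)
    - ∑ s, ∑ t, (R i s j t * Q s t + R j s i t * Q t s)

/-- Lichnerowicz operator `Γ` associated to `R`, acting on 4-covariant tensors. -/
def gamma4 (R Q : Fin m → Fin m → Fin m → Fin m → ℝ) (i j k w : Fin m) : ℝ :=
  (∑ s, ric R i s * Q s j k w) + (∑ s, ric R j s * Q i s k w) +
  (∑ s, ric R k s * Q i j s w) + (∑ s, ric R w s * Q i j k s)
  - ∑ s, ∑ t,
      (R i s j t * Q s t k w + R i s k t * Q s j t w + R i s w t * Q s j k t +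
       R j s i t * Q t s k w + R j s k t * Q i s t w + R j s w t * Q i s k t +
       R k s i t * Q t j s w + R k s j t * Q i t s w + R k s w t * Q i j s t +
       R w s i t * Q t j k s + R w s j t * Q i t k s + R w s k t * Q i j t s)

/-- Kulkarni–Nomizu product of symmetric matrices. -/
def kn (A B : Fin m → Fin m → ℝ) (i j k t : Fin m) : ℝ :=
  A i k * B j t + A j t * B i k - A i t * B j k - A j k * B i t

/-- Traceless part of a matrix. -/
def Zmat (E : Fin m → Fin m → ℝ) (i j : Fin m) : ℝ :=
  E i j - ((∑ k, E k k) / (m : ℝ)) * delta i j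

/-- Traceless part `Z_T` of the Ricci contraction of `T`. -/
def Zpart (T : Fin m → Fin m → Fin m → Fin m → ℝ) (i j : Fin m) : ℝ :=
  ric T i j - (traceS T / (m : ℝ)) * delta i j

/-- Schouten-type tensor `A_T`. -/
def Apart (T : Fin m → Fin m → Fin m → Fin m → ℝ) (i j : Fin m) : ℝ :=
  ric T i j - (traceS T / (2 * ((m : ℝ) - 1))) * delta i j

/-- Weyl part `W_T = T - (1/(m-2)) A_T ⊙ δ`. -/
def Wpart (T : Fin m → Fin m → Fin m → Fin m → ℝ) (i j k t : Fin m) : ℝ :=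
  T i j k t - (1 / ((m : ℝ) - 2)) * kn (Apart T) delta i j k t

/-- Pseudo-projective tensor `P_T`. -/
def pproj (T : Fin m → Fin m → Fin m → Fin m → ℝ) (i j k t : Fin m) : ℝ :=
  T i j k t - (1 / ((m : ℝ) - 1)) * (delta i k * ric T j t - delta i t * ric T j k)

/-- The 6-covariant tensor `T̂` associated to a 4-covariant tensor `T`. -/
def hat4 (T : Fin m → Fin m → Fin m → Fin m → ℝ) (i j k t s r : Fin m) : ℝ :=
  (1 / 2) * (T s j k t * delta i r + T i s k t * delta j r + T i j s t * delta k r +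
             T i j k s * delta t r - T r j k t * delta i s - T i r k t * delta j s -
             T i j r t * delta k s - T i j k r * delta t s)

/-- Sectional curvature of the plane spanned by `X, Y`. -/
def sect (R : Fin m → Fin m → Fin m → Fin m → ℝ) (X Y : Fin m → ℝ) : ℝ :=
  (∑ i, ∑ j, ∑ k, ∑ t, R i j k t * X i * Y j * X k * Y t) /
    ((∑ i, X i * X i) * (∑ i, Y i * Y i) - (∑ i, X i * Y i) ^ 2)

/-- Decomposable 2-form associated to the pair `(X, Y)`. -/
def dform (X Y : Fin m → ℝ) (i j : Fin m) : ℝ := (X i * Y j - X j * Y i) / 2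

/-- A full spectral decomposition of the curvature operator `𝔯` on `Λ²` induced by `R`:
`ω` is an orthonormal family of antisymmetric eigen-2-forms (of cardinality `dim Λ² = m(m-1)/2`,
hence an orthonormal eigenbasis) with nondecreasing eigenvalues `lam`. -/
def SpectralData (R : Fin m → Fin m → Fin m → Fin m → ℝ)
    (lam : Fin (m * (m - 1) / 2) → ℝ) (ω : Fin (m * (m - 1) / 2) → Fin m → Fin m → ℝ) :
    Prop :=
  (∀ α i j, ω α i j = - ω α j i) ∧
  (∀ α β, inner2 (ω α) (ω β) = if α = β then 1 else 0) ∧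
  (∀ α k t, (∑ i, ∑ j, R i j k t * ω α i j) = lam α * ω α k t) ∧
  Monotone lam

/-- `𝔯^(k)`: the average of the `k` smallest eigenvalues. -/
def partialAvg {N : ℕ} (lam : Fin N → ℝ) (k : ℕ) : ℝ :=
  (∑ α ∈ Finset.univ.filter (fun α : Fin N => (α : ℕ) < k), lam α) / (k : ℝ)

/-! ### Auxiliary machinery for `statement15` -/

section AuxSums

variable {κ₁ κ₂ κ₃ κ₄ κ₅ : Type*}

lemma aux_movein3 (s : Finset κ₁) (t : Finset κ₂) (u : Finset κ₃) (f : κ₁ → κ₂ → κ₃ → ℝ) :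
    ∑ a ∈ s, ∑ b ∈ t, ∑ c ∈ u, f a b c = ∑ b ∈ t, ∑ c ∈ u, ∑ a ∈ s, f a b c :=
  (Finset.sum_comm).trans (Finset.sum_congr rfl fun _ _ => Finset.sum_comm)

lemma aux_movein4 (s : Finset κ₁) (t : Finset κ₂) (u : Finset κ₃) (w : Finset κ₄)
    (f : κ₁ → κ₂ → κ₃ → κ₄ → ℝ) :
    ∑ a ∈ s, ∑ b ∈ t, ∑ c ∈ u, ∑ d ∈ w, f a b c d
      = ∑ b ∈ t, ∑ c ∈ u, ∑ d ∈ w, ∑ a ∈ s, f a b c d :=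
  (Finset.sum_comm).trans
    (Finset.sum_congr rfl fun b _ => aux_movein3 s u w (fun a c d => f a b c d))

lemma aux_movein5 (s : Finset κ₁) (t : Finset κ₂) (u : Finset κ₃) (w : Finset κ₄)
    (q : Finset κ₅) (f : κ₁ → κ₂ → κ₃ → κ₄ → κ₅ → ℝ) :
    ∑ a ∈ s, ∑ b ∈ t, ∑ c ∈ u, ∑ d ∈ w, ∑ e ∈ q, f a b c d e
      = ∑ b ∈ t, ∑ c ∈ u, ∑ d ∈ w, ∑ e ∈ q, ∑ a ∈ s, f a b c d e :=
  (Finset.sum_comm).trans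
    (Finset.sum_congr rfl fun b _ => aux_movein4 s u w q (fun a c d e => f a b c d e))

lemma aux_pull2 (s : Finset κ₁) (t : Finset κ₂) (r : ℝ) (f : κ₁ → κ₂ → ℝ) :
    ∑ a ∈ s, ∑ b ∈ t, r * f a b = r * ∑ a ∈ s, ∑ b ∈ t, f a b := by
  simp only [← Finset.mul_sum]

lemma aux_sep2 (s : Finset κ₁) (t : Finset κ₂) (f : κ₁ → ℝ) (g : κ₂ → ℝ) :
    ∑ a ∈ s, ∑ b ∈ t, f a * g b = (∑ a ∈ s, f a) * (∑ b ∈ t, g b) :=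
  (Finset.sum_mul_sum s t f g).symm

lemma aux_reorder_ktij {α : Type*} [Fintype α] (F : α → α → α → α → ℝ) :
    ∑ k, ∑ t, ∑ i, ∑ j, F i j k t = ∑ i, ∑ k, ∑ j, ∑ t, F i j k t :=
  calc ∑ k, ∑ t, ∑ i, ∑ j, F i j k t
      = ∑ t, ∑ i, ∑ j, ∑ k, F i j k t := aux_movein4 _ _ _ _ (fun k t i j => F i j k t)
    _ = ∑ i, ∑ j, ∑ k, ∑ t, F i j k t := aux_movein4 _ _ _ _ (fun t i j k => F i j k t)
    _ = ∑ i, ∑ k, ∑ j, ∑ t, F i j k t := Finset.sum_congr rfl fun _ _ => Finset.sum_comm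

end AuxSums

section AuxSkew

/-- The space of antisymmetric 2-tensors. -/
def skewSub (n : ℕ) : Submodule ℝ (Fin n → Fin n → ℝ) where
  carrier := {η | ∀ i j, η i j = - η j i}
  add_mem' := by
    intro a b ha hb i j
    simp only [Pi.add_apply]
    rw [ha i j, hb i j]; ring
  zero_mem' := by intro i j; simp
  smul_mem' := by
    intro c a ha i j
    simp only [Pi.smul_apply, smul_eq_mul]
    rw [ha i j]; ring

def skewIdx (n : ℕ) := {p : Fin n × Fin n // p.1 < p.2}

instance (n : ℕ) : Fintype (skewIdx n) := by unfold skewIdx; infer_instance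

def skewBase {n : ℕ} (p : skewIdx n) : skewSub n :=
  ⟨fun i j => if i = p.1.1 ∧ j = p.1.2 then 1 else if i = p.1.2 ∧ j = p.1.1 then -1 else 0, by
    intro i j
    have hp : (p.1.1 : ℕ) < (p.1.2 : ℕ) := p.2
    dsimp only
    split_ifs
    all_goals try norm_num
    all_goals exfalso
    all_goals (simp only [Fin.ext_iff] at *; omega)⟩

lemma skewIdx_card (n : ℕ) : Fintype.card (skewIdx n) = n * (n - 1) / 2 := by
  have e : skewIdx n ≃ Σ j : Fin n, Set.Iio j :=
    { toFun := fun p => ⟨p.1.2, ⟨p.1.1, p.2⟩⟩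
      invFun := fun s => ⟨(s.2.1, s.1), s.2.2⟩
      left_inv := fun p => rfl
      right_inv := fun s => rfl }
  rw [Fintype.card_congr e, Fintype.card_sigma]
  rw [Finset.sum_congr rfl (fun (j : Fin n) _ => (by simp : Fintype.card (Set.Iio j) = (j : ℕ)))]
  have h1 : ∑ j : Fin n, (j : ℕ) = ∑ i ∈ Finset.range n, i :=
    Fin.sum_univ_eq_sum_range (fun i => i) n
  rw [h1]
  have h2 := Finset.sum_range_id_mul_two n
  omega

lemma skewBase_sum_apply {n : ℕ} (g : skewIdx n → ℝ) (i j : Fin n) (h : i < j) :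
    ((∑ p, g p • skewBase p : skewSub n) : Fin n → Fin n → ℝ) i j = g ⟨(i, j), h⟩ := by
  rw [AddSubmonoidClass.coe_finset_sum]
  simp only [Finset.sum_apply]
  refine (Finset.sum_eq_single_of_mem (⟨(i, j), h⟩ : skewIdx n) (Finset.mem_univ _) ?_).trans ?_
  swap
  · simp [skewBase]
  · intro b _ hb
    have hb' : ¬(i = b.1.1 ∧ j = b.1.2) := by
      rintro ⟨h1, h2⟩
      exact hb (by apply Subtype.ext; apply Prod.ext <;> simp [h1.symm, h2.symm])
    have hlt : (b.1.1 : ℕ) < (b.1.2 : ℕ) := b.2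
    have hij : (i : ℕ) < (j : ℕ) := h
    have hb2 : ¬(i = b.1.2 ∧ j = b.1.1) := by
      rintro ⟨h1, h2⟩
      rw [Fin.ext_iff] at h1 h2
      omega
    simp [skewBase, SetLike.val_smul, hb', hb2]

lemma skew_eq_sum {n : ℕ} (x : skewSub n) :
    x = ∑ p : skewIdx n, ((x : Fin n → Fin n → ℝ) p.1.1 p.1.2) • skewBase p := by
  apply Subtype.ext
  funext i j
  set S : skewSub n := ∑ p : skewIdx n, ((x : Fin n → Fin n → ℝ) p.1.1 p.1.2) • skewBase p
    with hS
  have hSskew : ∀ i j, (S : Fin n → Fin n → ℝ) i j = - (S : Fin n → Fin n → ℝ) j i := S.2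
  have hxskew : ∀ i j, (x : Fin n → Fin n → ℝ) i j = - (x : Fin n → Fin n → ℝ) j i := x.2
  rcases lt_trichotomy i j with h | h | h
  · rw [skewBase_sum_apply _ i j h]
  · subst h
    have h1 := hxskew i i
    have h2 := hSskew i i
    linarith
  · rw [hxskew i j, hSskew i j, skewBase_sum_apply _ j i h]

lemma skew_finrank (n : ℕ) : Module.finrank ℝ (skewSub n) = n * (n - 1) / 2 := by
  classical
  have hli : LinearIndependent ℝ (skewBase : skewIdx n → skewSub n) := by
    rw [Fintype.linearIndependent_iff]
    intro g hg p
    have h0 := congrArg (fun y : skewSub n => (y : Fin n → Fin n → ℝ) p.1.1 p.1.2) hg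
    rw [skewBase_sum_apply g p.1.1 p.1.2 p.2] at h0
    have hp : (⟨(p.1.1, p.1.2), p.2⟩ : skewIdx n) = p := by
      apply Subtype.ext; exact Prod.mk.eta
    rw [hp] at h0
    simpa using h0
  have hspan : ⊤ ≤ Submodule.span ℝ (Set.range (skewBase : skewIdx n → skewSub n)) := by
    intro x _
    rw [skew_eq_sum x]
    exact Submodule.sum_mem _ fun p _ =>
      Submodule.smul_mem _ _ (Submodule.subset_span ⟨p, rfl⟩)
  rw [Module.finrank_eq_card_basis (Module.Basis.mk hli hspan), skewIdx_card]

end AuxSkew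

section AuxInner

variable {m : ℕ}

lemma aux_inner2_def (A B : Fin m → Fin m → ℝ) :
    inner2 A B = ∑ i, ∑ j, A i j * B i j := rfl

lemma aux_inner2_symm (A B : Fin m → Fin m → ℝ) : inner2 A B = inner2 B A :=
  Finset.sum_congr rfl fun _ _ => Finset.sum_congr rfl fun _ _ => mul_comm _ _

lemma aux_inner2_nonneg (A : Fin m → Fin m → ℝ) : 0 ≤ inner2 A A :=
  Finset.sum_nonneg fun _ _ => Finset.sum_nonneg fun _ _ => mul_self_nonneg _

lemma aux_inner2_zero_right (A : Fin m → Fin m → ℝ) :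
    inner2 A (0 : Fin m → Fin m → ℝ) = 0 := by
  simp [aux_inner2_def]

lemma aux_inner2_sum_right {ι : Type*} (s : Finset ι) (A : Fin m → Fin m → ℝ)
    (cc : ι → ℝ) (f : ι → Fin m → Fin m → ℝ) :
    inner2 A (fun k t => ∑ x ∈ s, cc x * f x k t) = ∑ x ∈ s, cc x * inner2 A (f x) := by
  show ∑ i, ∑ j, A i j * ∑ x ∈ s, cc x * f x i j = _
  calc ∑ i, ∑ j, A i j * ∑ x ∈ s, cc x * f x i j
      = ∑ i, ∑ j, ∑ x ∈ s, cc x * (A i j * f x i j) := by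
        refine Finset.sum_congr rfl fun i _ => Finset.sum_congr rfl fun j _ => ?_
        rw [Finset.mul_sum]
        exact Finset.sum_congr rfl fun x _ => by ring
    _ = ∑ x ∈ s, ∑ i, ∑ j, cc x * (A i j * f x i j) :=
        (aux_movein3 s Finset.univ Finset.univ (fun x i j => cc x * (A i j * f x i j))).symm
    _ = ∑ x ∈ s, cc x * inner2 A (f x) :=
        Finset.sum_congr rfl fun x _ => aux_pull2 _ _ _ _

/-- Completeness of a family of `m(m-1)/2` orthonormal antisymmetric tensors. -/
lemma aux_complete (ω : Fin (m * (m - 1) / 2) → Fin m → Fin m → ℝ)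
    (hsk : ∀ α i j, ω α i j = - ω α j i)
    (hor : ∀ α β, inner2 (ω α) (ω β) = if α = β then 1 else 0)
    (η : Fin m → Fin m → ℝ) (hη : ∀ i j, η i j = - η j i) :
    η = fun k t => ∑ α, inner2 (ω α) η * ω α k t := by
  classical
  set ωS : Fin (m * (m - 1) / 2) → skewSub m := fun α => ⟨ω α, hsk α⟩ with hωS
  have hcoe : ∀ g : Fin (m * (m - 1) / 2) → ℝ,
      ((∑ α, g α • ωS α : skewSub m) : Fin m → Fin m → ℝ)
        = fun k t => ∑ α, g α * ω α k t := by
    intro g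
    funext k t
    rw [AddSubmonoidClass.coe_finset_sum]
    simp only [Finset.sum_apply, SetLike.val_smul, Pi.smul_apply, smul_eq_mul, hωS]
  have hfilt : ∀ g : Fin (m * (m - 1) / 2) → ℝ, ∀ β,
      inner2 (ω β) (fun k t => ∑ α, g α * ω α k t) = g β := by
    intro g β
    rw [aux_inner2_sum_right]
    simp only [hor, mul_ite, mul_one, mul_zero, Finset.sum_ite_eq, Finset.mem_univ, if_true]
  have hli : LinearIndependent ℝ ωS := by
    rw [Fintype.linearIndependent_iff]
    intro g hg β
    have h0 : (fun k t => ∑ α, g α * ω α k t) = (0 : Fin m → Fin m → ℝ) := by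
      rw [← hcoe g, hg]
      rfl
    have h2 := hfilt g β
    rw [h0, aux_inner2_zero_right] at h2
    exact h2.symm
  have hcard : Fintype.card (Fin (m * (m - 1) / 2)) = Module.finrank ℝ (skewSub m) := by
    rw [skew_finrank]
    simp
  haveI : FiniteDimensional ℝ (skewSub m) := inferInstance
  have hspan2 : ⊤ ≤ Submodule.span ℝ (Set.range ωS) :=
    ge_of_eq (hli.span_eq_top_of_card_eq_finrank' hcard)
  set B := Module.Basis.mk hli hspan2 with hB
  have hBc : ∀ α, B α = ωS α := fun α => by
    rw [hB, Module.Basis.mk_apply]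
  set ηS : skewSub m := ⟨η, hη⟩ with hηS
  have hrepr := B.sum_repr ηS
  have hfun : η = fun k t => ∑ α, B.repr ηS α * ω α k t := by
    calc η = ((ηS : skewSub m) : Fin m → Fin m → ℝ) := rfl
      _ = ((∑ α, B.repr ηS α • B α : skewSub m) : Fin m → Fin m → ℝ) := by rw [hrepr]
      _ = ((∑ α, B.repr ηS α • ωS α : skewSub m) : Fin m → Fin m → ℝ) := by
          rw [Finset.sum_congr rfl fun α _ => by rw [hBc α]]
      _ = fun k t => ∑ α, B.repr ηS α * ω α k t := hcoe _
  have hcα : ∀ β, inner2 (ω β) η = B.repr ηS β := by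
    intro β
    rw [show inner2 (ω β) η = inner2 (ω β) (fun k t => ∑ α, B.repr ηS α * ω α k t) from by
      rw [← hfun]]
    exact hfilt _ β
  have final : (fun k t => ∑ α, inner2 (ω α) η * ω α k t)
      = fun k t => ∑ α, B.repr ηS α * ω α k t := by
    funext k t
    exact Finset.sum_congr rfl fun α _ => by rw [hcα α]
  rw [final]
  exact hfun

/-- Bessel inequality. -/
lemma aux_bessel {ι : Type*} [DecidableEq ι] (s : Finset ι) (ω0 : Fin m → Fin m → ℝ)
    (h1 : inner2 ω0 ω0 = 1) (f : ι → Fin m → Fin m → ℝ)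
    (horth : ∀ a ∈ s, ∀ b ∈ s, inner2 (f a) (f b) = if a = b then 1 else 0) :
    ∑ a ∈ s, inner2 ω0 (f a) ^ 2 ≤ 1 := by
  classical
  set cc : ι → ℝ := fun a => inner2 ω0 (f a) with hcc
  set Bf : Fin m → Fin m → ℝ := fun k t => ∑ a ∈ s, cc a * f a k t with hBf
  have hB1 : inner2 ω0 Bf = ∑ a ∈ s, cc a ^ 2 := by
    rw [hBf, aux_inner2_sum_right]
    refine Finset.sum_congr rfl fun a _ => ?_
    have h : inner2 ω0 (f a) = cc a := rfl
    rw [h]; ring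
  have hB2 : inner2 Bf Bf = ∑ a ∈ s, cc a ^ 2 := by
    rw [show inner2 Bf Bf = inner2 Bf (fun k t => ∑ a ∈ s, cc a * f a k t) from rfl]
    rw [aux_inner2_sum_right]
    refine Finset.sum_congr rfl fun a ha => ?_
    rw [aux_inner2_symm, hBf, aux_inner2_sum_right]
    rw [Finset.sum_congr rfl fun b hb => by rw [horth a ha b hb]]
    simp only [mul_ite, mul_one, mul_zero, Finset.sum_ite_eq, ha, if_true]
    ring
  have hexp : inner2 (fun k t => ω0 k t - Bf k t) (fun k t => ω0 k t - Bf k t)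
      = inner2 ω0 ω0 - inner2 ω0 Bf - inner2 Bf ω0 + inner2 Bf Bf := by
    simp only [aux_inner2_def]
    calc ∑ i, ∑ j, (ω0 i j - Bf i j) * (ω0 i j - Bf i j)
        = ∑ i, ∑ j, (ω0 i j * ω0 i j - ω0 i j * Bf i j - Bf i j * ω0 i j
            + Bf i j * Bf i j) :=
          Finset.sum_congr rfl fun i _ => Finset.sum_congr rfl fun j _ => by ring
      _ = _ := by
          simp only [Finset.sum_add_distrib, Finset.sum_sub_distrib]
  have hpos := aux_inner2_nonneg (fun k t => ω0 k t - Bf k t)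
  rw [hexp, h1, hB1, hB2, aux_inner2_symm Bf ω0, hB1] at hpos
  have : ∑ a ∈ s, inner2 ω0 (f a) ^ 2 = ∑ a ∈ s, cc a ^ 2 :=
    Finset.sum_congr rfl fun a _ => by rw [hcc]
  linarith

/-- Parseval equality for a complete orthonormal family. -/
lemma aux_parseval (ω : Fin (m * (m - 1) / 2) → Fin m → Fin m → ℝ)
    (hsk : ∀ α i j, ω α i j = - ω α j i)
    (hor : ∀ α β, inner2 (ω α) (ω β) = if α = β then 1 else 0)
    (η : Fin m → Fin m → ℝ) (hη : ∀ i j, η i j = - η j i) :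
    ∑ α, inner2 (ω α) η ^ 2 = inner2 η η := by
  have hcomp := aux_complete ω hsk hor η hη
  calc ∑ α, inner2 (ω α) η ^ 2
      = ∑ α, inner2 (ω α) η * inner2 η (ω α) := by
        refine Finset.sum_congr rfl fun α _ => ?_
        rw [aux_inner2_symm η (ω α)]; ring
    _ = inner2 η (fun k t => ∑ α, inner2 (ω α) η * ω α k t) := by
        rw [aux_inner2_sum_right]
    _ = inner2 η η := by rw [← hcomp]

end AuxInner

section AuxCurv

variable {m : ℕ}

lemma aux_dd_expand (X X' Y : Fin m → ℝ) :
    ∑ i, ∑ j, (X i * Y j - X j * Y i) * (X' i * Y j - X' j * Y i)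
      = 2 * ((∑ i, X i * X' i) * (∑ i, Y i * Y i)
          - (∑ i, X i * Y i) * (∑ i, X' i * Y i)) := by
  calc ∑ i, ∑ j, (X i * Y j - X j * Y i) * (X' i * Y j - X' j * Y i)
      = ∑ i, ∑ j, ((X i * X' i) * (Y j * Y j) - (X i * Y i) * (X' j * Y j)
          - (X' i * Y i) * (X j * Y j) + (Y i * Y i) * (X j * X' j)) :=
        Finset.sum_congr rfl fun i _ => Finset.sum_congr rfl fun j _ => by ring
    _ = (∑ i, X i * X' i) * (∑ j, Y j * Y j) - (∑ i, X i * Y i) * (∑ j, X' j * Y j)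
          - (∑ i, X' i * Y i) * (∑ j, X j * Y j)
          + (∑ i, Y i * Y i) * (∑ j, X j * X' j) := by
        simp only [Finset.sum_add_distrib, Finset.sum_sub_distrib, aux_sep2]
    _ = _ := by ring

lemma aux_antisym_contract (G : Fin m → Fin m → ℝ) (hG : ∀ k t, G t k = - G k t)
    (X Y : Fin m → ℝ) :
    ∑ k, ∑ t, G k t * (X k * Y t - X t * Y k) = 2 * ∑ k, ∑ t, G k t * (X k * Y t) := by
  have h1 : ∑ k, ∑ t, G k t * (X k * Y t - X t * Y k)
      = ∑ k, ∑ t, G k t * (X k * Y t) - ∑ k, ∑ t, G k t * (X t * Y k) := by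
    simp only [mul_sub, Finset.sum_sub_distrib]
  have h2 : ∑ k, ∑ t, G k t * (X t * Y k) = ∑ k, ∑ t, G t k * (X k * Y t) :=
    Finset.sum_comm
  have h3 : ∑ k, ∑ t, G t k * (X k * Y t) = - ∑ k, ∑ t, G k t * (X k * Y t) :=
    calc ∑ k, ∑ t, G t k * (X k * Y t)
        = ∑ k, ∑ t, -(G k t * (X k * Y t)) :=
          Finset.sum_congr rfl fun k _ => Finset.sum_congr rfl fun t _ => by
            rw [hG k t]; ring
      _ = - ∑ k, ∑ t, G k t * (X k * Y t) := by
          simp only [Finset.sum_neg_distrib]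
  rw [h1, h2, h3]; ring

lemma aux_rq_vv (R : Fin m → Fin m → Fin m → Fin m → ℝ)
    (hR1 : ∀ i j k t, R i j k t = - R j i k t) (v : Fin m → ℝ) :
    ∑ i, ∑ k, ∑ j, ∑ t, R i j k t * (v i * v k * (v j * v t)) = 0 := by
  have e1 : ∑ i, ∑ k, ∑ j, ∑ t, R i j k t * (v i * v k * (v j * v t))
      = ∑ i, ∑ j, ∑ k, ∑ t, R i j k t * (v i * v k * (v j * v t)) :=
    Finset.sum_congr rfl fun i _ => Finset.sum_comm
  have e2 : ∑ i, ∑ j, ∑ k, ∑ t, R i j k t * (v i * v k * (v j * v t))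
      = ∑ i, ∑ j, ∑ k, ∑ t, R j i k t * (v j * v k * (v i * v t)) :=
    Finset.sum_comm
  have e3 : ∑ i, ∑ j, ∑ k, ∑ t, R j i k t * (v j * v k * (v i * v t))
      = ∑ i, ∑ j, ∑ k, ∑ t, -(R i j k t * (v i * v k * (v j * v t))) :=
    Finset.sum_congr rfl fun i _ => Finset.sum_congr rfl fun j _ =>
      Finset.sum_congr rfl fun k _ => Finset.sum_congr rfl fun t _ => by
        rw [hR1 j i k t]; ring
  have e4 : ∑ i, ∑ j, ∑ k, ∑ t, -(R i j k t * (v i * v k * (v j * v t)))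
      = - ∑ i, ∑ j, ∑ k, ∑ t, R i j k t * (v i * v k * (v j * v t)) := by
    simp only [Finset.sum_neg_distrib]
  have e5 : ∑ i, ∑ k, ∑ j, ∑ t, R i j k t * (v i * v k * (v j * v t))
      = - ∑ i, ∑ k, ∑ j, ∑ t, R i j k t * (v i * v k * (v j * v t)) :=
    calc ∑ i, ∑ k, ∑ j, ∑ t, R i j k t * (v i * v k * (v j * v t))
        = ∑ i, ∑ j, ∑ k, ∑ t, R i j k t * (v i * v k * (v j * v t)) := e1
      _ = ∑ i, ∑ j, ∑ k, ∑ t, R j i k t * (v j * v k * (v i * v t)) := e2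
      _ = ∑ i, ∑ j, ∑ k, ∑ t, -(R i j k t * (v i * v k * (v j * v t))) := e3
      _ = - ∑ i, ∑ j, ∑ k, ∑ t, R i j k t * (v i * v k * (v j * v t)) := e4
      _ = - ∑ i, ∑ k, ∑ j, ∑ t, R i j k t * (v i * v k * (v j * v t)) := by rw [← e1]
  linarith

lemma aux_ric_expand (R : Fin m → Fin m → Fin m → Fin m → ℝ)
    (v : Fin m → ℝ) (b : Fin m → Fin m → ℝ)
    (hcol : ∀ k l, ∑ a, b a k * b a l = if k = l then 1 else 0) :
    ∑ i, ∑ j, ric R i j * v i * v j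
      = ∑ a, ∑ i, ∑ k, ∑ j, ∑ t, R i j k t * (b a i * b a k * (v j * v t)) := by
  symm
  calc ∑ a, ∑ i, ∑ k, ∑ j, ∑ t, R i j k t * (b a i * b a k * (v j * v t))
      = ∑ i, ∑ k, ∑ j, ∑ t, ∑ a, R i j k t * (b a i * b a k * (v j * v t)) :=
        aux_movein5 _ _ _ _ _ _
    _ = ∑ i, ∑ k, (∑ j, ∑ t, R i j k t * (v j * v t)) * (if i = k then 1 else 0) := by
        refine Finset.sum_congr rfl fun i _ => Finset.sum_congr rfl fun k _ => ?_
        rw [← hcol i k]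
        calc ∑ j, ∑ t, ∑ a, R i j k t * (b a i * b a k * (v j * v t))
            = ∑ j, ∑ t, (R i j k t * (v j * v t)) * (∑ a, b a i * b a k) := by
              refine Finset.sum_congr rfl fun j _ => Finset.sum_congr rfl fun t _ => ?_
              rw [Finset.mul_sum]
              exact Finset.sum_congr rfl fun a _ => by ring
          _ = (∑ j, ∑ t, R i j k t * (v j * v t)) * (∑ a, b a i * b a k) := by
              rw [Finset.sum_mul]
              exact Finset.sum_congr rfl fun j _ => by rw [Finset.sum_mul]
    _ = ∑ i, ∑ j, ∑ t, R i j i t * (v j * v t) := by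
        refine Finset.sum_congr rfl fun i _ => ?_
        simp only [mul_ite, mul_one, mul_zero, Finset.sum_ite_eq, Finset.mem_univ, if_true]
    _ = ∑ j, ∑ t, ∑ i, R i j i t * (v j * v t) := aux_movein3 _ _ _ _
    _ = ∑ i, ∑ j, ric R i j * v i * v j := by
        refine Finset.sum_congr rfl fun j _ => Finset.sum_congr rfl fun t _ => ?_
        rw [← Finset.sum_mul]
        simp only [ric]
        ring

lemma aux_rq_eigen (R : Fin m → Fin m → Fin m → Fin m → ℝ)
    (hR1 : ∀ i j k t, R i j k t = - R j i k t)
    (hR2 : ∀ i j k t, R i j k t = R k t i j)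
    (lam : Fin (m * (m - 1) / 2) → ℝ) (ω : Fin (m * (m - 1) / 2) → Fin m → Fin m → ℝ)
    (hsk : ∀ α i j, ω α i j = - ω α j i)
    (hor : ∀ α β, inner2 (ω α) (ω β) = if α = β then 1 else 0)
    (heig : ∀ α k t, (∑ i, ∑ j, R i j k t * ω α i j) = lam α * ω α k t)
    (X Y : Fin m → ℝ) :
    ∑ i, ∑ k, ∑ j, ∑ t, R i j k t * (X i * X k * (Y j * Y t))
      = (1 / 2) * ∑ α, lam α
          * inner2 (ω α) (fun i j => (X i * Y j - X j * Y i) / Real.sqrt 2) ^ 2 := by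
  classical
  set η : Fin m → Fin m → ℝ := fun i j => (X i * Y j - X j * Y i) / Real.sqrt 2 with hη
  have hs2 : Real.sqrt 2 * Real.sqrt 2 = 2 := Real.mul_self_sqrt (by norm_num)
  have hs2ne : Real.sqrt 2 ≠ 0 := by positivity
  have hηskew : ∀ i j, η i j = - η j i := fun i j => by
    simp only [hη]; ring
  have hcomp : η = fun k t => ∑ α, inner2 (ω α) η * ω α k t :=
    aux_complete ω hsk hor η hηskew
  have hptw : ∀ i j, η i j = ∑ α, inner2 (ω α) η * ω α i j := fun i j => by
    conv_lhs => rw [hcomp]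
  set G : Fin m → Fin m → ℝ := fun k t => ∑ i, ∑ j, R i j k t * (X i * Y j) with hG
  have hR4 : ∀ i j k t, R i j k t = - R i j t k := fun i j k t => by
    rw [hR2 i j k t, hR1 k t i j, hR2 t k i j]
  have hGas : ∀ k t, G t k = - G k t := by
    intro k t
    show (∑ i, ∑ j, R i j t k * (X i * Y j)) = - ∑ i, ∑ j, R i j k t * (X i * Y j)
    calc ∑ i, ∑ j, R i j t k * (X i * Y j)
        = ∑ i, ∑ j, -(R i j k t * (X i * Y j)) :=
          Finset.sum_congr rfl fun i _ => Finset.sum_congr rfl fun j _ => by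
            rw [hR4 i j t k]; ring
      _ = - ∑ i, ∑ j, R i j k t * (X i * Y j) := by
          simp only [Finset.sum_neg_distrib]
  have hcon : ∀ k t, ∑ i, ∑ j, R i j k t * η i j
      = (2 * G k t) / Real.sqrt 2 := by
    intro k t
    have h1 : ∑ i, ∑ j, R i j k t * η i j
        = (∑ i, ∑ j, R i j k t * (X i * Y j - X j * Y i)) / Real.sqrt 2 := by
      have hstep : ∀ i j : Fin m, R i j k t * η i j
          = (R i j k t * (X i * Y j - X j * Y i)) / Real.sqrt 2 := by
        intro i j
        show R i j k t * ((X i * Y j - X j * Y i) / Real.sqrt 2)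
          = (R i j k t * (X i * Y j - X j * Y i)) / Real.sqrt 2
        ring
      rw [Finset.sum_congr rfl fun i _ => Finset.sum_congr rfl fun j _ => hstep i j]
      simp only [← Finset.sum_div]
    rw [h1, aux_antisym_contract (fun i j => R i j k t) (fun p q => hR1 q p k t) X Y]
  have heigfun : ∀ k t, ∑ i, ∑ j, R i j k t * η i j
      = ∑ α, inner2 (ω α) η * (lam α * ω α k t) := by
    intro k t
    calc ∑ i, ∑ j, R i j k t * η i j
        = ∑ i, ∑ j, ∑ α, inner2 (ω α) η * (R i j k t * ω α i j) := by
          refine Finset.sum_congr rfl fun i _ => Finset.sum_congr rfl fun j _ => ?_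
          rw [hptw i j, Finset.mul_sum]
          exact Finset.sum_congr rfl fun α _ => by ring
      _ = ∑ α, ∑ i, ∑ j, inner2 (ω α) η * (R i j k t * ω α i j) :=
          (aux_movein3 _ _ _ _).symm
      _ = ∑ α, inner2 (ω α) η * (∑ i, ∑ j, R i j k t * ω α i j) :=
          Finset.sum_congr rfl fun α _ => aux_pull2 _ _ _ _
      _ = ∑ α, inner2 (ω α) η * (lam α * ω α k t) :=
          Finset.sum_congr rfl fun α _ => by rw [heig α k t]
  have hQ1 : ∑ k, ∑ t, (∑ i, ∑ j, R i j k t * η i j) * η k t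
      = 2 * ∑ i, ∑ k, ∑ j, ∑ t, R i j k t * (X i * X k * (Y j * Y t)) := by
    calc ∑ k, ∑ t, (∑ i, ∑ j, R i j k t * η i j) * η k t
        = ∑ k, ∑ t, G k t * (X k * Y t - X t * Y k) := by
          refine Finset.sum_congr rfl fun k _ => Finset.sum_congr rfl fun t _ => ?_
          rw [hcon k t]
          simp only [hη]
          rw [div_mul_div_comm, hs2]
          ring
      _ = 2 * ∑ k, ∑ t, G k t * (X k * Y t) := aux_antisym_contract G hGas X Y
      _ = 2 * ∑ i, ∑ k, ∑ j, ∑ t, R i j k t * (X i * X k * (Y j * Y t)) := by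
          congr 1
          calc ∑ k, ∑ t, G k t * (X k * Y t)
              = ∑ k, ∑ t, ∑ i, ∑ j, R i j k t * (X i * Y j) * (X k * Y t) := by
                refine Finset.sum_congr rfl fun k _ => Finset.sum_congr rfl fun t _ => ?_
                simp only [hG]
                rw [Finset.sum_mul]
                exact Finset.sum_congr rfl fun i _ => by rw [Finset.sum_mul]
            _ = ∑ i, ∑ k, ∑ j, ∑ t, R i j k t * (X i * Y j) * (X k * Y t) :=
                aux_reorder_ktij _
            _ = ∑ i, ∑ k, ∑ j, ∑ t, R i j k t * (X i * X k * (Y j * Y t)) :=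
                Finset.sum_congr rfl fun i _ => Finset.sum_congr rfl fun k _ =>
                  Finset.sum_congr rfl fun j _ => Finset.sum_congr rfl fun t _ => by ring
  have hQ2 : ∑ k, ∑ t, (∑ i, ∑ j, R i j k t * η i j) * η k t
      = ∑ α, lam α * inner2 (ω α) η ^ 2 := by
    calc ∑ k, ∑ t, (∑ i, ∑ j, R i j k t * η i j) * η k t
        = ∑ k, ∑ t, ∑ α, ∑ β, (inner2 (ω α) η * (lam α * ω α k t))
            * (inner2 (ω β) η * ω β k t) := by
          refine Finset.sum_congr rfl fun k _ => Finset.sum_congr rfl fun t _ => ?_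
          rw [heigfun k t, hptw k t]
          exact Finset.sum_mul_sum _ _ _ _
      _ = ∑ α, ∑ β, ∑ k, ∑ t, (inner2 (ω α) η * (lam α * ω α k t))
            * (inner2 (ω β) η * ω β k t) :=
          (aux_movein4 _ _ _ _ _).trans (aux_movein4 _ _ _ _
            (fun t α β k => (inner2 (ω α) η * (lam α * ω α k t))
              * (inner2 (ω β) η * ω β k t)))
      _ = ∑ α, ∑ β, (inner2 (ω α) η * lam α * inner2 (ω β) η)
            * ∑ k, ∑ t, ω α k t * ω β k t := by
          refine Finset.sum_congr rfl fun α _ => Finset.sum_congr rfl fun β _ => ?_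
          rw [← aux_pull2]
          exact Finset.sum_congr rfl fun k _ => Finset.sum_congr rfl fun t _ => by ring
      _ = ∑ α, ∑ β, (inner2 (ω α) η * lam α * inner2 (ω β) η)
            * (if α = β then 1 else 0) := by
          refine Finset.sum_congr rfl fun α _ => Finset.sum_congr rfl fun β _ => ?_
          rw [show ∑ k, ∑ t, ω α k t * ω β k t = inner2 (ω α) (ω β) from rfl, hor α β]
      _ = ∑ α, lam α * inner2 (ω α) η ^ 2 := by
          refine Finset.sum_congr rfl fun α _ => ?_
          simp only [mul_ite, mul_one, mul_zero, Finset.sum_ite_eq, Finset.mem_univ, if_true]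
          ring
  linarith [hQ1, hQ2]

end AuxCurv

section AuxONB

lemma aux_exists_onb (m : ℕ) (hm : 1 ≤ m) (v : Fin m → ℝ) (hv : ∑ i, v i * v i = 1) :
    ∃ b : Fin m → Fin m → ℝ,
      (∀ a a', ∑ i, b a i * b a' i = if a = a' then 1 else 0) ∧
      (∀ k l, ∑ a, b a k * b a l = if k = l then 1 else 0) ∧
      (∀ i, b ⟨0, hm⟩ i = v i) := by
  classical
  have hinner : ∀ x y : EuclideanSpace ℝ (Fin m), (inner ℝ x y : ℝ) = ∑ i, x i * y i := by
    intro x y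
    rw [PiLp.inner_apply]
    simp [RCLike.inner_apply, mul_comm]
  set v' : EuclideanSpace ℝ (Fin m) := (WithLp.equiv 2 _).symm v with hv'
  have hv'app : ∀ i, v' i = v i := fun i => rfl
  have hnorm : ‖v'‖ = 1 := by
    have h1 : (inner ℝ v' v' : ℝ) = 1 := by rw [hinner]; simpa [hv'app] using hv
    have := real_inner_self_eq_norm_mul_norm v'
    nlinarith [norm_nonneg v']
  have hcard : Module.finrank ℝ (EuclideanSpace ℝ (Fin m)) = Fintype.card (Fin m) := by
    simp [finrank_euclideanSpace]
  have horth : Orthonormal ℝ (Set.restrict {(⟨0, hm⟩ : Fin m)} (fun _ => v')) := by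
    constructor
    · intro i; exact hnorm
    · intro i j hij
      exact absurd (Subsingleton.elim i j) hij
  obtain ⟨b, hb⟩ := horth.exists_orthonormalBasis_extension_of_card_eq hcard
  refine ⟨fun a i => b a i, ?_, ?_, ?_⟩
  · intro a a'
    have := orthonormal_iff_ite.mp b.orthonormal a a'
    rw [hinner] at this
    simpa using this
  · intro k l
    have h := b.sum_repr (EuclideanSpace.single l 1)
    have h2 := congrFun (congrArg (fun x : EuclideanSpace ℝ (Fin m) => (x : Fin m → ℝ)) h) k
    simp only [EuclideanSpace.single_apply, Finset.sum_apply, PiLp.smul_apply,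
      smul_eq_mul] at h2
    have h3 : ∀ a, b.repr (EuclideanSpace.single l 1) a = b a l := by
      intro a
      rw [b.repr_apply_apply, EuclideanSpace.inner_single_right]
      simp
    rw [Finset.sum_congr rfl (fun a _ => by rw [h3 a])] at h2
    have h4 : (∑ a, (b a).ofLp l • b a).ofLp k = ∑ a, (b a).ofLp l * (b a).ofLp k := by
      simp [WithLp.ofLp_sum, Finset.sum_apply]
    rw [h4] at h2
    rw [← h2]
    exact Finset.sum_congr rfl (fun a _ => mul_comm _ _)
  · intro i
    have := congrFun (congrArg (fun x : EuclideanSpace ℝ (Fin m) => (x : Fin m → ℝ))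
      (hb ⟨0, hm⟩ (by simp))) i
    simpa [hv'app] using this

end AuxONB

section AuxKyFan

lemma aux_card_filter_lt {N n : ℕ} (hnN : n ≤ N) :
    (Finset.univ.filter (fun α : Fin N => (α : ℕ) < n)).card = n := by
  have he : Finset.univ.filter (fun α : Fin N => (α : ℕ) < n)
      = Finset.map ⟨Fin.castLE hnN, Fin.castLE_injective hnN⟩ Finset.univ := by
    ext α
    rw [Finset.mem_filter, Finset.mem_map]
    constructor
    · rintro ⟨-, hα⟩
      exact ⟨⟨(α : ℕ), hα⟩, Finset.mem_univ _, Fin.ext rfl⟩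
    · rintro ⟨β, -, rfl⟩
      exact ⟨Finset.mem_univ _, β.2⟩
  rw [he, Finset.card_map, Finset.card_univ, Fintype.card_fin]

lemma aux_kyfan1 {N : ℕ} (lam : Fin N → ℝ) (hmono : Monotone lam) (d : Fin N → ℝ)
    (hd0 : ∀ α, 0 ≤ d α) (hd1 : ∀ α, d α ≤ 1) (n : ℕ) (hn1 : 1 ≤ n) (hnN : n ≤ N)
    (hsum : ∑ α, d α = (n : ℝ)) :
    ∑ α ∈ Finset.univ.filter (fun α : Fin N => (α : ℕ) < n), lam α ≤ ∑ α, lam α * d α := by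
  classical
  have hNpos : 0 < N := lt_of_lt_of_le hn1 hnN
  have split := Finset.sum_filter_add_sum_filter_not Finset.univ
    (fun α : Fin N => (α : ℕ) < n) (fun α => lam α * d α)
  have splitd := Finset.sum_filter_add_sum_filter_not Finset.univ
    (fun α : Fin N => (α : ℕ) < n) d
  set c0 : ℝ := lam ⟨n - 1, by omega⟩ with hc0
  set F : Finset (Fin N) := Finset.univ.filter (fun α : Fin N => (α : ℕ) < n) with hF
  set Fc : Finset (Fin N) := Finset.univ.filter (fun α : Fin N => ¬ (α : ℕ) < n) with hFc
  have hv0 : ((⟨n - 1, by omega⟩ : Fin N) : ℕ) = n - 1 := rfl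
  have hcard : F.card = n := aux_card_filter_lt hnN
  have hle : ∀ α ∈ F, lam α ≤ c0 := by
    intro α hα
    rw [hF, Finset.mem_filter] at hα
    refine hmono ?_
    rw [Fin.le_def, hv0]
    omega
  have hge : ∀ α ∈ Fc, c0 ≤ lam α := by
    intro α hα
    rw [hFc, Finset.mem_filter] at hα
    have h2 := hα.2
    refine hmono ?_
    rw [Fin.le_def, hv0]
    omega
  have e1 : ∑ α ∈ F, (lam α + c0 * (d α - 1)) ≤ ∑ α ∈ F, lam α * d α :=
    Finset.sum_le_sum fun α hα => by nlinarith [hle α hα, hd1 α, hd0 α]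
  have e2 : ∑ α ∈ Fc, c0 * d α ≤ ∑ α ∈ Fc, lam α * d α :=
    Finset.sum_le_sum fun α hα => mul_le_mul_of_nonneg_right (hge α hα) (hd0 α)
  have e3 : ∑ α ∈ F, (lam α + c0 * (d α - 1))
      = ∑ α ∈ F, lam α + c0 * ∑ α ∈ F, d α - c0 * n := by
    rw [Finset.sum_add_distrib, ← Finset.mul_sum, Finset.sum_sub_distrib,
      Finset.sum_const, hcard]
    simp only [nsmul_eq_mul, mul_one]
    ring
  have e4 : ∑ α ∈ Fc, c0 * d α = c0 * ∑ α ∈ Fc, d α := (Finset.mul_sum _ _ _).symm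
  rw [hsum] at splitd
  rw [← split]
  rw [e3] at e1
  rw [e4] at e2
  have hsd2 : c0 * ∑ α ∈ F, d α + c0 * ∑ α ∈ Fc, d α = c0 * n := by
    rw [← mul_add, splitd]
  linarith

lemma aux_kyfan2 {N : ℕ} (lam : Fin N → ℝ) (hmono : Monotone lam)
    (k n : ℕ) (hk1 : 1 ≤ k) (hkn : k ≤ n) (hnN : n ≤ N) :
    (n : ℝ) / (k : ℝ) * ∑ α ∈ Finset.univ.filter (fun α : Fin N => (α : ℕ) < k), lam α
      ≤ ∑ α ∈ Finset.univ.filter (fun α : Fin N => (α : ℕ) < n), lam α := by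
  classical
  have hNpos : 0 < N := lt_of_lt_of_le (lt_of_lt_of_le hk1 hkn) hnN
  set Fk : Finset (Fin N) := Finset.univ.filter (fun α : Fin N => (α : ℕ) < k) with hFk
  set Fn : Finset (Fin N) := Finset.univ.filter (fun α : Fin N => (α : ℕ) < n) with hFn
  have hsub : Fk ⊆ Fn := by
    intro α hα
    rw [hFk, Finset.mem_filter] at hα
    rw [hFn, Finset.mem_filter]
    exact ⟨hα.1, by omega⟩
  have hcardk : Fk.card = k := aux_card_filter_lt (le_trans hkn hnN)
  have hcardn : Fn.card = n := aux_card_filter_lt hnN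
  set ck : ℝ := lam ⟨k - 1, by omega⟩ with hck
  have hvk : ((⟨k - 1, by omega⟩ : Fin N) : ℕ) = k - 1 := rfl
  have h1 : ∑ α ∈ Fk, lam α ≤ (k : ℝ) * ck := by
    calc ∑ α ∈ Fk, lam α ≤ ∑ _α ∈ Fk, ck := by
          refine Finset.sum_le_sum fun α hα => ?_
          rw [hFk, Finset.mem_filter] at hα
          have h2 := hα.2
          refine hmono ?_
          rw [Fin.le_def, hvk]
          omega
      _ = (k : ℝ) * ck := by rw [Finset.sum_const, hcardk, nsmul_eq_mul]
  have h2 : ((n : ℝ) - k) * ck ≤ ∑ α ∈ Fn \ Fk, lam α := by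
    have hstep : ∑ _α ∈ Fn \ Fk, ck ≤ ∑ α ∈ Fn \ Fk, lam α := by
      refine Finset.sum_le_sum fun α hα => ?_
      rw [Finset.mem_sdiff] at hα
      obtain ⟨hin, hout⟩ := hα
      rw [hFk, Finset.mem_filter] at hout
      have hk' : ¬ (α : ℕ) < k := fun hc => hout ⟨Finset.mem_univ _, hc⟩
      refine hmono ?_
      rw [Fin.le_def, hvk]
      omega
    calc ((n : ℝ) - k) * ck = ((n - k : ℕ) : ℝ) * ck := by
          rw [Nat.cast_sub hkn]
      _ = ∑ _α ∈ Fn \ Fk, ck := by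
          rw [Finset.sum_const, Finset.card_sdiff_of_subset hsub, hcardk, hcardn, nsmul_eq_mul]
      _ ≤ ∑ α ∈ Fn \ Fk, lam α := hstep
  have hsplit : ∑ α ∈ Fn \ Fk, lam α + ∑ α ∈ Fk, lam α = ∑ α ∈ Fn, lam α :=
    Finset.sum_sdiff hsub
  have hk0 : (0 : ℝ) < (k : ℝ) := by exact_mod_cast hk1
  have hnk0 : (0 : ℝ) ≤ ((n : ℝ) - k) / k := by
    apply div_nonneg _ (le_of_lt hk0)
    have : (k : ℝ) ≤ (n : ℝ) := by exact_mod_cast hkn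
    linarith
  have key : ((n : ℝ) - k) / k * ∑ α ∈ Fk, lam α ≤ ((n : ℝ) - k) * ck := by
    calc ((n : ℝ) - k) / k * ∑ α ∈ Fk, lam α ≤ ((n : ℝ) - k) / k * ((k : ℝ) * ck) :=
          mul_le_mul_of_nonneg_left h1 hnk0
      _ = ((n : ℝ) - k) * ck := by field_simp
  have hexp : (n : ℝ) / k * ∑ α ∈ Fk, lam α
      = ∑ α ∈ Fk, lam α + ((n : ℝ) - k) / k * ∑ α ∈ Fk, lam α := by
    field_simp
    ring
  rw [hexp]
  linarith

end AuxKyFan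


/-- For any integer `1 ≤ k ≤ m−1` and any unit vector `v`,
`Ric(v,v) ≥ ((m−1)/2)·𝔯^(k)`. -/
theorem statement15 (m : ℕ) (hm : 2 ≤ m)
    (R : Fin m → Fin m → Fin m → Fin m → ℝ) (hR : IsACT R)
    (lam : Fin (m * (m - 1) / 2) → ℝ) (ω : Fin (m * (m - 1) / 2) → Fin m → Fin m → ℝ)
    (hspec : SpectralData R lam ω)
    (k : ℕ) (hk1 : 1 ≤ k) (hk2 : k ≤ m - 1)
    (v : Fin m → ℝ) (hv : ∑ i, v i * v i = 1) :
    ((m : ℝ) - 1) / 2 * partialAvg lam k ≤ ∑ i, ∑ j, ric R i j * v i * v j := by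
  classical
  have hm1 : 1 ≤ m := le_trans one_le_two hm
  obtain ⟨hsk, hor, heig, hmono⟩ := hspec
  obtain ⟨hR1, hR2, -⟩ := hR
  obtain ⟨b, hrow, hcol, hb0⟩ := aux_exists_onb m hm1 v hv
  set z : Fin m := ⟨0, hm1⟩ with hz
  set η : Fin m → Fin m → Fin m → ℝ :=
    fun a i j => (b a i * v j - b a j * v i) / Real.sqrt 2 with hηdef
  have hηeq : ∀ a, η a = fun i j => (b a i * v j - b a j * v i) / Real.sqrt 2 :=
    fun a => rfl
  set d : Fin (m * (m - 1) / 2) → ℝ :=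
    fun α => ∑ a ∈ Finset.univ.erase z, inner2 (ω α) (η a) ^ 2 with hddef
  have hdeq : ∀ α, d α = ∑ a ∈ Finset.univ.erase z, inner2 (ω α) (η a) ^ 2 :=
    fun α => rfl
  have hs2 : Real.sqrt 2 * Real.sqrt 2 = 2 := Real.mul_self_sqrt (by norm_num)
  have hηskew : ∀ a i j, η a i j = - η a j i := fun a i j => by
    simp only [hηdef]; ring
  have hbz : b z = v := funext hb0
  have hdotv : ∀ a ∈ Finset.univ.erase z, (∑ i, b a i * v i) = 0 := by
    intro a ha
    rw [Finset.mem_erase] at ha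
    have h := hrow a z
    rw [if_neg ha.1] at h
    rw [← h]
    exact Finset.sum_congr rfl fun i _ => by rw [hbz]
  have horthη : ∀ a ∈ Finset.univ.erase z, ∀ a' ∈ Finset.univ.erase z,
      inner2 (η a) (η a') = if a = a' then 1 else 0 := by
    intro a ha a' ha'
    have hexp : inner2 (η a) (η a')
        = (∑ i, ∑ j, (b a i * v j - b a j * v i) * (b a' i * v j - b a' j * v i)) / 2 := by
      rw [aux_inner2_def]
      rw [Finset.sum_congr rfl fun i _ => Finset.sum_congr rfl fun j _ => by
        show η a i j * η a' i j = ((b a i * v j - b a j * v i)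
          * (b a' i * v j - b a' j * v i)) / 2
        simp only [hηdef]
        rw [div_mul_div_comm, hs2]]
      simp only [← Finset.sum_div]
    rw [hexp, aux_dd_expand, hrow a a', hdotv a ha, hdotv a' ha', hv]
    split_ifs <;> ring
  have hpars : ∀ a ∈ Finset.univ.erase z, ∑ α, inner2 (ω α) (η a) ^ 2 = 1 := by
    intro a ha
    have hp := aux_parseval ω hsk hor (η a) (hηskew a)
    rw [hp, horthη a ha a ha, if_pos rfl]
  have hd1 : ∀ α, d α ≤ 1 := by
    intro α
    rw [hdeq α]
    refine aux_bessel _ (ω α) ?_ η horthη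
    rw [hor α α, if_pos rfl]
  have hd0 : ∀ α, 0 ≤ d α := by
    intro α
    rw [hdeq α]
    exact Finset.sum_nonneg fun a _ => sq_nonneg _
  have hcardA : (Finset.univ.erase z).card = m - 1 := by
    rw [Finset.card_erase_of_mem (Finset.mem_univ z), Finset.card_univ, Fintype.card_fin]
  have hdsum : ∑ α, d α = ((m - 1 : ℕ) : ℝ) := by
    rw [Finset.sum_congr rfl fun α _ => hdeq α, Finset.sum_comm,
      Finset.sum_congr rfl fun a ha => hpars a ha, Finset.sum_const, hcardA,
      nsmul_eq_mul, mul_one]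
  have hQa : ∀ a, ∑ x, ∑ y, ∑ u, ∑ w, R x u y w * (b a x * b a y * (v u * v w))
      = (1 / 2) * ∑ α, lam α * inner2 (ω α) (η a) ^ 2 := by
    intro a
    rw [aux_rq_eigen R hR1 hR2 lam ω hsk hor heig (b a) v]
  have key : ∑ i, ∑ j, ric R i j * v i * v j = (1 / 2) * ∑ α, lam α * d α := by
    calc ∑ i, ∑ j, ric R i j * v i * v j
        = ∑ a, ∑ x, ∑ y, ∑ u, ∑ w, R x u y w * (b a x * b a y * (v u * v w)) :=
          aux_ric_expand R v b hcol
      _ = (∑ a ∈ Finset.univ.erase z,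
            ∑ x, ∑ y, ∑ u, ∑ w, R x u y w * (b a x * b a y * (v u * v w)))
          + ∑ x, ∑ y, ∑ u, ∑ w, R x u y w * (b z x * b z y * (v u * v w)) :=
          (Finset.sum_erase_add _ _ (Finset.mem_univ z)).symm
      _ = ∑ a ∈ Finset.univ.erase z,
            ∑ x, ∑ y, ∑ u, ∑ w, R x u y w * (b a x * b a y * (v u * v w)) := by
          rw [hbz, aux_rq_vv R hR1 v, add_zero]
      _ = ∑ a ∈ Finset.univ.erase z, (1 / 2) * ∑ α, lam α * inner2 (ω α) (η a) ^ 2 :=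
          Finset.sum_congr rfl fun a _ => hQa a
      _ = (1 / 2) * ∑ a ∈ Finset.univ.erase z, ∑ α, lam α * inner2 (ω α) (η a) ^ 2 := by
          rw [← Finset.mul_sum]
      _ = (1 / 2) * ∑ α, lam α * d α := by
          congr 1
          rw [Finset.sum_comm]
          refine Finset.sum_congr rfl fun α _ => ?_
          rw [hdeq α, Finset.mul_sum]
  have hnN : m - 1 ≤ m * (m - 1) / 2 := by
    rw [Nat.le_div_iff_mul_le (by norm_num : 0 < 2)]
    have := Nat.mul_le_mul_right (m - 1) hm
    omega
  have h1 := aux_kyfan1 lam hmono d hd0 hd1 (m - 1) (by omega) hnN hdsum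
  have h2 := aux_kyfan2 lam hmono k (m - 1) hk1 hk2 hnN
  have hcast : ((m - 1 : ℕ) : ℝ) = (m : ℝ) - 1 := by
    rw [Nat.cast_sub hm1, Nat.cast_one]
  rw [hcast] at h2
  rw [key]
  simp only [partialAvg]
  have e : ((m : ℝ) - 1) / 2
        * ((∑ α ∈ Finset.univ.filter (fun α : Fin (m * (m - 1) / 2) => (α : ℕ) < k),
            lam α) / (k : ℝ))
      = (1 / 2) * (((m : ℝ) - 1) / (k : ℝ)
        * ∑ α ∈ Finset.univ.filter (fun α : Fin (m * (m - 1) / 2) => (α : ℕ) < k),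
            lam α) := by
    ring
  rw [e]
  linarith [h1, h2]

end

end Paper
end

section
/- Let N ≥ 1 and let a_1 ≤ a_2 ≤ … ≤ a_N be a nondecreasing sequence of real numbers. If Σ_{i=1}^k a_i ≥ 0 for some integer k with 1 ≤ k ≤ N−1, then Σ_{i=1}^N a_i ≥ (1/k)·√((1/N)·Σ_{i=1}^N a_i²). -/
open Finset

namespace Paper

noncomputable section

variable {m : ℕ}

set_option maxHeartbeats 1000000 in
/-- For a nondecreasing sequence `a_1 ≤ … ≤ a_N`, if `Σ_{i=1}^k a_i ≥ 0` for
some `1 ≤ k ≤ N−1`, then `Σ_{i=1}^N a_i ≥ (1/k)·√((1/N)·Σ_{i=1}^N a_i²)`. -/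
theorem statement17 (N : ℕ) (hN : 1 ≤ N) (a : ℕ → ℝ)
    (ha : ∀ i, 1 ≤ i → i < N → a i ≤ a (i + 1))
    (k : ℕ) (hk : 1 ≤ k) (hkN : k ≤ N - 1)
    (hpos : 0 ≤ ∑ i ∈ Finset.Icc 1 k, a i) :
    (1 / (k : ℝ)) * Real.sqrt ((1 / (N : ℝ)) * ∑ i ∈ Finset.Icc 1 N, (a i) ^ 2)
      ≤ ∑ i ∈ Finset.Icc 1 N, a i := by
  have hk1N : k + 1 ≤ N := by omega
  have hkNle : k ≤ N := by omega
  have hk0 : (0:ℝ) < k := by exact_mod_cast hk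
  have hN0 : (0:ℝ) < N := by exact_mod_cast hN
  -- monotonicity
  have mono : ∀ j, j ≤ N → ∀ i, 1 ≤ i → i ≤ j → a i ≤ a j := by
    intro j
    induction j with
    | zero => intro _ i h1 hij; omega
    | succ n ih =>
      intro hjN i h1 hij
      rcases Nat.lt_or_ge i (n+1) with h | h
      · exact le_trans (ih (by omega) i h1 (by omega)) (ha n (by omega) (by omega))
      · have : i = n + 1 := by omega
        rw [this]
  set P := ∑ i ∈ Finset.Icc 1 k, a i with hP
  set Q := ∑ i ∈ Finset.Icc (k+1) N, a i with hQ
  set S := ∑ i ∈ Finset.Icc 1 N, a i with hS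
  -- split sums
  have e1 : Finset.Icc 1 k = Finset.Ioc 0 k := Finset.Icc_add_one_left_eq_Ioc 0 k
  have e2 : Finset.Icc (k+1) N = Finset.Ioc k N := Finset.Icc_add_one_left_eq_Ioc k N
  have e3 : Finset.Icc 1 N = Finset.Ioc 0 N := Finset.Icc_add_one_left_eq_Ioc 0 N
  have hsplit : P + Q = S := by
    rw [hP, hQ, hS, e1, e2, e3]
    exact Finset.sum_Ioc_consecutive _ (Nat.zero_le k) hkNle
  have hsplit2 : (∑ i ∈ Finset.Icc 1 k, (a i)^2) + (∑ i ∈ Finset.Icc (k+1) N, (a i)^2)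
      = ∑ i ∈ Finset.Icc 1 N, (a i)^2 := by
    rw [e1, e2, e3]
    exact Finset.sum_Ioc_consecutive _ (Nat.zero_le k) hkNle
  have hk1 : (1:ℝ) ≤ (k:ℝ) := by exact_mod_cast hk
  -- a k ≥ 0
  have hPle : P ≤ (k : ℝ) * a k := by
    calc P ≤ ∑ _i ∈ Finset.Icc 1 k, a k := by
            apply Finset.sum_le_sum
            intro i hi
            obtain ⟨h1, h2⟩ := Finset.mem_Icc.mp hi
            exact mono k hkNle i h1 h2
      _ = (k : ℝ) * a k := by
            rw [Finset.sum_const, Nat.card_Icc]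
            simp [nsmul_eq_mul]
  have hak : 0 ≤ a k := by nlinarith
  -- nonnegativity on the tail
  have htail : ∀ i ∈ Finset.Icc (k+1) N, 0 ≤ a i := by
    intro i hi
    obtain ⟨h1, h2⟩ := Finset.mem_Icc.mp hi
    exact le_trans hak (mono i h2 k hk (by omega))
  have hQ0 : 0 ≤ Q := Finset.sum_nonneg htail
  have hS0 : 0 ≤ S := by rw [← hsplit]; linarith
  -- a k ≤ S
  have hak1Q : a (k+1) ≤ Q :=
    Finset.single_le_sum htail (Finset.mem_Icc.mpr ⟨le_refl _, hk1N⟩)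
  have hakS : a k ≤ S := by
    have h1 : a k ≤ a (k+1) := ha k hk (by omega)
    linarith [hsplit]
  -- bound on the head squares
  have hhead : ∀ i ∈ Finset.Icc 1 k, (a i)^2 ≤ ((k:ℝ) * a k)^2 := by
    intro i hi
    obtain ⟨h1, h2⟩ := Finset.mem_Icc.mp hi
    have hup : a i ≤ a k := mono k hkNle i h1 h2
    have hlow : -((k:ℝ) * a k) ≤ a i := by
      have herase : ∑ j ∈ (Finset.Icc 1 k).erase i, a j ≤ ((k:ℝ) - 1) * a k := by
        calc ∑ j ∈ (Finset.Icc 1 k).erase i, a j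
            ≤ ∑ _j ∈ (Finset.Icc 1 k).erase i, a k := by
              apply Finset.sum_le_sum
              intro j hj
              obtain ⟨hj1, hj2⟩ := Finset.mem_Icc.mp (Finset.mem_of_mem_erase hj)
              exact mono k hkNle j hj1 hj2
          _ = ((k:ℝ) - 1) * a k := by
              rw [Finset.sum_const, Finset.card_erase_of_mem hi, Nat.card_Icc,
                nsmul_eq_mul]
              have : ((k + 1 - 1 - 1 : ℕ) : ℝ) = (k:ℝ) - 1 := by
                have : k + 1 - 1 - 1 = k - 1 := by omega
                rw [this, Nat.cast_sub hk]; norm_num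
              rw [this]
      have hsum : ∑ j ∈ (Finset.Icc 1 k).erase i, a j + a i = P :=
        Finset.sum_erase_add _ _ hi
      nlinarith
    have hup2 : a i ≤ (k:ℝ) * a k := le_trans hup (by nlinarith [hak, hk1])
    exact sq_le_sq' hlow hup2
  have hheadsum : (∑ i ∈ Finset.Icc 1 k, (a i)^2) ≤ (k:ℝ) * ((k:ℝ) * a k)^2 := by
    calc (∑ i ∈ Finset.Icc 1 k, (a i)^2)
        ≤ ∑ _i ∈ Finset.Icc 1 k, ((k:ℝ) * a k)^2 := Finset.sum_le_sum hhead
      _ = (k:ℝ) * ((k:ℝ) * a k)^2 := by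
          rw [Finset.sum_const, Nat.card_Icc]; simp [nsmul_eq_mul]
  -- bound on the tail squares
  have htailsum : (∑ i ∈ Finset.Icc (k+1) N, (a i)^2) ≤ Q * Q := by
    calc (∑ i ∈ Finset.Icc (k+1) N, (a i)^2)
        ≤ ∑ i ∈ Finset.Icc (k+1) N, a i * Q := by
          apply Finset.sum_le_sum
          intro i hi
          have h1 : a i ≤ Q := Finset.single_le_sum htail hi
          have h2 : 0 ≤ a i := htail i hi
          nlinarith
      _ = Q * Q := by rw [← Finset.sum_mul, ← hQ, mul_comm]
  -- total bound
  have htotal : (∑ i ∈ Finset.Icc 1 N, (a i)^2) ≤ (N:ℝ) * ((k:ℝ) * S)^2 := by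
    have hkN' : (k:ℝ) + 1 ≤ (N:ℝ) := by exact_mod_cast hk1N
    have hQS : Q ≤ S := by linarith [hsplit, hpos]
    have hstep1 : ((k:ℝ) * a k)^2 ≤ ((k:ℝ) * S)^2 :=
      pow_le_pow_left₀ (by positivity) (mul_le_mul_of_nonneg_left hakS (le_of_lt hk0)) 2
    have hstep2 : Q * Q ≤ S^2 := by nlinarith
    have hk2 : (1:ℝ) ≤ (k:ℝ)^2 := by nlinarith [hk1]
    have hc : (k:ℝ)^3 + 1 ≤ (N:ℝ) * (k:ℝ)^2 := by
      nlinarith [hk2, mul_le_mul_of_nonneg_right hkN' (sq_nonneg (k:ℝ))]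
    rw [← hsplit2]
    have h1 : (∑ i ∈ Finset.Icc 1 k, (a i)^2) ≤ (k:ℝ) * ((k:ℝ) * S)^2 := by
      calc (∑ i ∈ Finset.Icc 1 k, (a i)^2) ≤ (k:ℝ) * ((k:ℝ) * a k)^2 := hheadsum
        _ ≤ (k:ℝ) * ((k:ℝ) * S)^2 := by nlinarith [hstep1]
    have h2 : (∑ i ∈ Finset.Icc (k+1) N, (a i)^2) ≤ S^2 := le_trans htailsum hstep2
    have h3 : (k:ℝ) * ((k:ℝ) * S)^2 + S^2 ≤ (N:ℝ) * ((k:ℝ) * S)^2 := by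
      nlinarith [mul_nonneg (sub_nonneg.mpr hc) (sq_nonneg S)]
    linarith
  -- conclude
  have hsqrt : Real.sqrt ((1 / (N:ℝ)) * ∑ i ∈ Finset.Icc 1 N, (a i)^2) ≤ (k:ℝ) * S := by
    have h1 : (1 / (N:ℝ)) * (∑ i ∈ Finset.Icc 1 N, (a i)^2) ≤ ((k:ℝ) * S)^2 := by
      rw [div_mul_eq_mul_div, one_mul, div_le_iff₀ hN0]
      calc (∑ i ∈ Finset.Icc 1 N, (a i)^2) ≤ (N:ℝ) * ((k:ℝ) * S)^2 := htotal
        _ = ((k:ℝ) * S)^2 * (N:ℝ) := by ring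
    calc Real.sqrt ((1 / (N:ℝ)) * ∑ i ∈ Finset.Icc 1 N, (a i)^2)
        ≤ Real.sqrt (((k:ℝ) * S)^2) := Real.sqrt_le_sqrt h1
      _ = (k:ℝ) * S := Real.sqrt_sq (by positivity)
  calc (1 / (k:ℝ)) * Real.sqrt ((1 / (N:ℝ)) * ∑ i ∈ Finset.Icc 1 N, (a i)^2)
      ≤ (1 / (k:ℝ)) * ((k:ℝ) * S) := by
        apply mul_le_mul_of_nonneg_left hsqrt (by positivity)
    _ = S := by field_simp

end

end Paper
end

section
/- Let N ≥ 2 be an integer and let a_1, …, a_N and b_1, …, b_N be sequences of non-negative real numbers such that a_i ≤ a_{i+1} for 1 ≤ i < N. Let 1 ≤ k < N be an integer such that b_i ≤ (1/k)·Σ_{j=1}^N b_j for every i = 1, …, N. Then Σ_{i=1}^N a_i b_i ≥ (1/k)·(Σ_{i=1}^k a_i)·(Σ_{j=1}^N b_j). -/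
open Finset

namespace Paper

noncomputable section

variable {m : ℕ}

/-- For nonnegative sequences `a` (nondecreasing) and `b` with
`b_i ≤ (1/k)·Σ_j b_j` for all `i`, one has
`Σ a_i b_i ≥ (1/k)·(Σ_{i=1}^k a_i)·(Σ_j b_j)`. -/
theorem statement18 (N : ℕ) (hN : 2 ≤ N) (a b : ℕ → ℝ)
    (ha0 : ∀ i, 1 ≤ i → i ≤ N → 0 ≤ a i) (hb0 : ∀ i, 1 ≤ i → i ≤ N → 0 ≤ b i)
    (hmono : ∀ i, 1 ≤ i → i < N → a i ≤ a (i + 1))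
    (k : ℕ) (hk : 1 ≤ k) (hkN : k < N)
    (hb : ∀ i, 1 ≤ i → i ≤ N → b i ≤ (1 / (k : ℝ)) * ∑ j ∈ Finset.Icc 1 N, b j) :
    (1 / (k : ℝ)) * (∑ i ∈ Finset.Icc 1 k, a i) * (∑ j ∈ Finset.Icc 1 N, b j)
      ≤ ∑ i ∈ Finset.Icc 1 N, a i * b i := by
  set B := ∑ j ∈ Finset.Icc 1 N, b j with hB
  have hk0 : (0:ℝ) < (k:ℝ) := by exact_mod_cast hk
  have hmono' : ∀ i j, 1 ≤ i → i ≤ j → j ≤ N → a i ≤ a j := by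
    intro i j hi hij hjN
    induction j with
    | zero => omega
    | succ n ih =>
      rcases Nat.eq_or_lt_of_le hij with h | h
      · rw [h]
      · exact le_trans (ih (by omega) (by omega)) (hmono n (by omega) (by omega))
  have hIcc : ∀ n : ℕ, Finset.Icc 1 n = Finset.Ioc 0 n := fun n => Finset.Icc_add_one_left_eq_Ioc 0 n
  have hsplit : ∀ f : ℕ → ℝ, ∑ i ∈ Finset.Icc 1 N, f i
      = ∑ i ∈ Finset.Ioc 0 k, f i + ∑ i ∈ Finset.Ioc k N, f i := by
    intro f
    rw [hIcc, Finset.sum_Ioc_consecutive f (Nat.zero_le k) (le_of_lt hkN)]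
  set Sa := ∑ i ∈ Finset.Ioc 0 k, a i with hSa
  set Sb := ∑ i ∈ Finset.Ioc 0 k, b i with hSb
  set P := ∑ i ∈ Finset.Ioc 0 k, a i * b i with hP
  set Tb := ∑ i ∈ Finset.Ioc k N, b i with hTb
  set T := ∑ i ∈ Finset.Ioc k N, a i * b i with hT
  have hBsplit : B = Sb + Tb := hsplit b
  have hak0 : 0 ≤ a k := le_trans (ha0 1 le_rfl (by omega)) (hmono' 1 k le_rfl hk (by omega))
  -- tail inequality
  have htail : a k * Tb ≤ T := by
    rw [hTb, hT, Finset.mul_sum]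
    apply Finset.sum_le_sum
    intro i hi
    simp only [Finset.mem_Ioc] at hi
    exact mul_le_mul_of_nonneg_right (hmono' k i hk (le_of_lt hi.1) hi.2)
      (hb0 i (by omega) hi.2)
  -- head inequality
  have hhead : 0 ≤ ∑ i ∈ Finset.Ioc 0 k, (a k - a i) * (B / k - b i) := by
    apply Finset.sum_nonneg
    intro i hi
    simp only [Finset.mem_Ioc] at hi
    apply mul_nonneg
    · have := hmono' i k hi.1 hi.2 (by omega)
      linarith
    · have := hb i hi.1 (by omega)
      rw [div_eq_mul_inv, mul_comm]
      rw [one_div] at this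
      linarith [this]
  have hexpand : ∑ i ∈ Finset.Ioc 0 k, (a k - a i) * (B / k - b i)
      = (k:ℝ) * (a k * (B / k)) - a k * Sb - (B / k) * Sa + P := by
    have : ∀ i ∈ Finset.Ioc 0 k, (a k - a i) * (B / k - b i)
        = a k * (B / k) - a k * b i - (B / k) * a i + a i * b i := by
      intro i _; ring
    rw [Finset.sum_congr rfl this]
    simp only [Finset.sum_add_distrib, Finset.sum_sub_distrib, ← Finset.mul_sum,
      Finset.sum_const, Nat.card_Ioc, Nat.sub_zero, nsmul_eq_mul, hSa, hSb, hP]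
    ring
  have hkB : (k:ℝ) * (a k * (B / k)) = a k * B := by
    field_simp
  rw [hexpand, hkB] at hhead
  have hgoal : (1 / (k:ℝ)) * (∑ i ∈ Finset.Icc 1 k, a i) * B = (B / k) * Sa := by
    rw [hIcc, ← hSa]; ring
  rw [hsplit (fun i => a i * b i), hgoal]
  -- from hhead: P ≥ a k * Sb + (B/k)*Sa - a k * B = (B/k)*Sa - a k * Tb
  nlinarith [htail, hhead, hBsplit]

end

end Paper
end
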